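/- arXiv:2001.03706 — 8 statements merged into one kernel-verified Lean document; each statement's English description precedes it below -/
import Mathlib

section
/- Let α : Γ ↷ X be the inverse limit of actions αₙ : Γ ↷ Xₙ of a group Γ on compact Hausdorff spaces Xₙ along factor maps πₙ. If each αₙ has paradoxical comparison, then the inverse limit action α has paradoxical comparison. -/
/-
STATEMENT 1: If each action αₙ : Γ ↷ Xₙ (on compact Hausdorff spaces, with factor maps
πₙ : X_{n+1} → Xₙ) has paradoxical comparison, then the inverse limit action also has
paradoxical comparison.
-/

open Set

/-- `K ≺ V` for a compact set `K` and an open set `V`, with respect to the action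
`a : G → X → X`: there are finitely many open sets covering `K` and group elements
whose translates of these sets are pairwise disjoint subsets of `V`. -/
def ActCSubEq {G X : Type*} [TopologicalSpace X] (a : G → X → X) (K V : Set X) : Prop :=
  ∃ (n : ℕ) (U : Fin n → Set X) (s : Fin n → G),
    (∀ i, IsOpen (U i)) ∧ K ⊆ ⋃ i, U i ∧ (∀ i, a (s i) '' U i ⊆ V) ∧
      Pairwise fun i j => Disjoint (a (s i) '' U i) (a (s j) '' U j)

/-- `U ≺_d V` for open sets. -/
def ActDSubEq {G X : Type*} [TopologicalSpace X] (a : G → X → X) (U V : Set X) : Prop :=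
  ∀ F : Set X, F ⊆ U → IsCompact F →
    ∃ O₁ O₂ : Set X, IsOpen O₁ ∧ IsOpen O₂ ∧ O₁.Nonempty ∧ O₂.Nonempty ∧
      O₁ ⊆ V ∧ O₂ ⊆ V ∧ Disjoint O₁ O₂ ∧ ActCSubEq a F O₁ ∧ ActCSubEq a F O₂

/-- The action has paradoxical comparison if `O ≺_d O` for every nonempty open `O`. -/
def ActParadoxicalComparison {G X : Type*} [TopologicalSpace X] (a : G → X → X) : Prop :=
  ∀ O : Set X, IsOpen O → O.Nonempty → ActDSubEq a O O

open Filter Topology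

/-!
A compact subset of an open set of the inverse limit already lies in a cylinder `pₙ⁻¹' W`
inside that open set, where `pₙ` is the projection to `Xₙ` and `W ⊆ Xₙ` is open: the
cylinders at level `n` grow with `n` and cover the open set, so compactness picks one level.
Since `pₙ` is continuous and equivariant, comparison `K ≺ V` in `Xₙ` pulls back to
`pₙ⁻¹' K ≺ pₙ⁻¹' V`, and paradoxical comparison of `W` in `Xₙ` pulls back to the cylinder.
-/

section Comparison

variable {G Y X : Type*} [TopologicalSpace Y] [TopologicalSpace X]
  {a : G → Y → Y} {b : G → X → X}

theorem ActCSubEq.mono_left {K K' V : Set Y} (h : ActCSubEq a K V) (hK : K' ⊆ K) :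
    ActCSubEq a K' V := by
  obtain ⟨n, U, s, hUo, hKU, hUV, hUd⟩ := h
  exact ⟨n, U, s, hUo, hK.trans hKU, hUV, hUd⟩

theorem ActCSubEq.nonempty {K V : Set Y} (h : ActCSubEq a K V) (hK : K.Nonempty) :
    V.Nonempty := by
  obtain ⟨n, U, s, -, hKU, hUV, -⟩ := h
  obtain ⟨x, hx⟩ := hK
  obtain ⟨i, hi⟩ := mem_iUnion.mp (hKU hx)
  exact ⟨a (s i) x, hUV i (mem_image_of_mem _ hi)⟩

theorem ActCSubEq.preimage {p : Y → X} (hp : Continuous p) (hpa : ∀ g y, p (a g y) = b g (p y))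
    {K V : Set X} (h : ActCSubEq b K V) : ActCSubEq a (p ⁻¹' K) (p ⁻¹' V) := by
  obtain ⟨n, U, s, hUo, hKU, hUV, hUd⟩ := h
  have himage : ∀ i, a (s i) '' (p ⁻¹' U i) ⊆ p ⁻¹' (b (s i) '' U i) := by
    rintro i _ ⟨y, hy, rfl⟩
    exact ⟨p y, hy, (hpa _ _).symm⟩
  refine ⟨n, fun i => p ⁻¹' U i, s, fun i => (hUo i).preimage hp, ?_, ?_, ?_⟩
  · simpa only [preimage_iUnion] using preimage_mono hKU
  · exact fun i => (himage i).trans (preimage_mono (hUV i))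
  · exact fun i j hij => ((hUd hij).preimage p).mono (himage i) (himage j)

theorem ActDSubEq.mono {U U' V V' : Set Y} (h : ActDSubEq a U V) (hU : U' ⊆ U) (hV : V ⊆ V') :
    ActDSubEq a U' V' := by
  intro F hF hFc
  obtain ⟨O₁, O₂, h₁o, h₂o, h₁ne, h₂ne, h₁V, h₂V, hd, h₁, h₂⟩ := h F (hF.trans hU) hFc
  exact ⟨O₁, O₂, h₁o, h₂o, h₁ne, h₂ne, h₁V.trans hV, h₂V.trans hV, hd, h₁, h₂⟩

/-- Adding a point of `p ⁻¹' U` to the compact set before pushing it forward keeps the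
pulled-back open sets nonempty when `p` is not surjective. -/
theorem ActDSubEq.preimage {p : Y → X} (hp : Continuous p) (hpa : ∀ g y, p (a g y) = b g (p y))
    {U V : Set X} (h : ActDSubEq b U V) (hU : (p ⁻¹' U).Nonempty) :
    ActDSubEq a (p ⁻¹' U) (p ⁻¹' V) := by
  intro F hF hFc
  obtain ⟨x₀, hx₀⟩ := hU
  obtain ⟨O₁, O₂, h₁o, h₂o, -, -, h₁V, h₂V, hd, h₁, h₂⟩ :=
    h (p '' insert x₀ F) (image_subset_iff.mpr (insert_subset hx₀ hF)) ((hFc.insert x₀).image hp)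
  have hpull : ∀ {O}, ActCSubEq b (p '' insert x₀ F) O → ActCSubEq a (insert x₀ F) (p ⁻¹' O) :=
    fun hO => (hO.preimage hp hpa).mono_left (subset_preimage_image p _)
  exact ⟨p ⁻¹' O₁, p ⁻¹' O₂, h₁o.preimage hp, h₂o.preimage hp,
    (hpull h₁).nonempty (insert_nonempty _ _), (hpull h₂).nonempty (insert_nonempty _ _),
    preimage_mono h₁V, preimage_mono h₂V, hd.preimage p,
    (hpull h₁).mono_left (subset_insert _ _), (hpull h₂).mono_left (subset_insert _ _)⟩

end Comparison

abbrev InverseLimit {X : ℕ → Type*} (π : ∀ n, X (n + 1) → X n) : Type _ :=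
  { x : ∀ n, X n // ∀ n, π n (x (n + 1)) = x n }

namespace InverseLimit

variable {X : ℕ → Type*} {π : ∀ n, X (n + 1) → X n}

def proj (π : ∀ n, X (n + 1) → X n) (n : ℕ) (x : InverseLimit π) : X n := x.1 n

theorem proj_succ (n : ℕ) : π n ∘ proj π (n + 1) = proj π n :=
  funext fun x => x.2 n

variable [∀ n, TopologicalSpace (X n)]

theorem continuous_proj (n : ℕ) : Continuous (proj π n) :=
  (continuous_apply n).comp continuous_subtype_val

theorem nhds_eq_iInf_comap (x : InverseLimit π) :
    𝓝 x = ⨅ n, comap (proj π n) (𝓝 (proj π n x)) := by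
  simp only [nhds_induced, nhds_pi, Filter.pi, comap_iInf, comap_comap]
  rfl

theorem antitone_comap_nhds (hπ : ∀ n, Continuous (π n)) (x : InverseLimit π) :
    Antitone fun n => comap (proj π n) (𝓝 (proj π n x)) := by
  refine antitone_nat_of_succ_le fun n => ?_
  calc comap (proj π (n + 1)) (𝓝 (proj π (n + 1) x))
      ≤ comap (proj π (n + 1)) (comap (π n) (𝓝 (proj π n x))) :=
        comap_mono (tendsto_iff_comap.mp ((hπ n).tendsto' _ _ (congrFun (proj_succ n) x)))
    _ = comap (proj π n) (𝓝 (proj π n x)) := by rw [comap_comap, proj_succ]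

theorem exists_isOpen_preimage_proj_subset (hπ : ∀ n, Continuous (π n)) {O : Set (InverseLimit π)}
    (hO : IsOpen O) {x : InverseLimit π} (hx : x ∈ O) :
    ∃ n, ∃ W : Set (X n), IsOpen W ∧ proj π n x ∈ W ∧ proj π n ⁻¹' W ⊆ O := by
  have hOx : O ∈ ⨅ n, comap (proj π n) (𝓝 (proj π n x)) := nhds_eq_iInf_comap x ▸ hO.mem_nhds hx
  obtain ⟨n, t, ht, htO⟩ := (mem_iInf_of_directed (antitone_comap_nhds hπ x).directed_ge O).mp hOx
  obtain ⟨W, hWt, hW, hxW⟩ := mem_nhds_iff.mp ht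
  exact ⟨n, W, hW, hxW, (preimage_mono hWt).trans htO⟩

theorem exists_isOpen_preimage_proj_subset_of_isCompact (hπ : ∀ n, Continuous (π n))
    {C O : Set (InverseLimit π)} (hC : IsCompact C) (hO : IsOpen O) (hCO : C ⊆ O) :
    ∃ n, ∃ W : Set (X n), IsOpen W ∧ C ⊆ proj π n ⁻¹' W ∧ proj π n ⁻¹' W ⊆ O := by
  let W n : Set (X n) := ⋃₀ {W | IsOpen W ∧ proj π n ⁻¹' W ⊆ O}
  have hWo n : IsOpen (W n) := isOpen_sUnion fun _ hW => hW.1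
  have hWO n : proj π n ⁻¹' W n ⊆ O := by
    rw [preimage_sUnion]
    exact iUnion₂_subset fun _ hW => hW.2
  have hmono : Monotone fun n => proj π n ⁻¹' W n := by
    refine monotone_nat_of_le_succ fun n => ?_
    have hlift : π n ⁻¹' W n ⊆ W (n + 1) := by
      refine subset_sUnion_of_mem ⟨(hWo n).preimage (hπ n), ?_⟩
      rw [← preimage_comp, proj_succ]
      exact hWO n
    simpa only [← preimage_comp, proj_succ] using preimage_mono (f := proj π (n + 1)) hlift
  have hcover : C ⊆ ⋃ n, proj π n ⁻¹' W n := fun x hx => by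
    obtain ⟨n, V, hV, hxV, hVO⟩ := exists_isOpen_preimage_proj_subset hπ hO (hCO hx)
    exact mem_iUnion.mpr ⟨n, show proj π n x ∈ W n from mem_sUnion_of_mem hxV ⟨hV, hVO⟩⟩
  obtain ⟨n, hn⟩ := hC.elim_directed_cover _ (fun n => (hWo n).preimage (continuous_proj n))
    hcover hmono.directed_le
  exact ⟨n, W n, hWo n, hn, hWO n⟩

end InverseLimit

theorem inverseLimit_paradoxicalComparison {G : Type*} [Group G] (Xn : ℕ → Type*)
    [∀ n, TopologicalSpace (Xn n)]
    [∀ n, MulAction G (Xn n)]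
    (π : ∀ n, Xn (n + 1) → Xn n)
    (hcont : ∀ n, Continuous (π n))
    (hequiv : ∀ (n : ℕ) (g : G) (x : Xn (n + 1)), π n (g • x) = g • π n x)
    (hpara : ∀ n, ActParadoxicalComparison (fun (g : G) (x : Xn n) => g • x)) :
    ActParadoxicalComparison
      (fun (g : G) (x : { x : ∀ n, Xn n // ∀ n, π n (x (n + 1)) = x n }) =>
        (⟨fun n => g • x.1 n, fun n => by rw [hequiv n g (x.1 (n + 1)), x.2 n]⟩ :
          { x : ∀ n, Xn n // ∀ n, π n (x (n + 1)) = x n })) := by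
  intro O hO ⟨x₀, hx₀⟩ F hFO hF
  obtain ⟨n, W, hW, hFW, hWO⟩ := InverseLimit.exists_isOpen_preimage_proj_subset_of_isCompact
    hcont (hF.insert x₀) hO (insert_subset hx₀ hFO)
  have hWne : (InverseLimit.proj π n ⁻¹' W).Nonempty := ⟨x₀, hFW (mem_insert _ _)⟩
  refine (ActDSubEq.mono ?_ ((subset_insert _ _).trans hFW) hWO) F subset_rfl hF
  exact (hpara n W hW ((hWne.image _).mono (image_preimage_subset _ _))).preimage
    (InverseLimit.continuous_proj n) (fun _ _ => rfl) hWne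
end

section
/- Let Γ be a non-discrete locally compact Hausdorff topological group, Λ a dense subgroup of Γ, and α a topological group automorphism of Γ such that α(Λ)=Λ and such that there is an open neighborhood U of the identity e ∈ Γ with {αᵏ(U) : k ∈ ℤ} a neighborhood base at e. Let the (discrete) semidirect product Λ ⋊_α ℤ act on the space Γ by (λ,n)·g = λ·αⁿ(g). Then this action is minimal, satisfies U ≺ V for all nonempty open sets U,V ⊆ Γ, and admits no invariant regular Borel probability measure on Γ. -/
open Set

/-- `U ≺ V` for open sets: `K ≺ V` for every compact `K ⊆ U`. -/
def ActOSubEq {G X : Type*} [TopologicalSpace X] (a : G → X → X) (U V : Set X) : Prop :=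
  ∀ K : Set X, K ⊆ U → IsCompact K → ActCSubEq a K V

/-!
Every orbit contains the right translate `Λ * x` of the dense subgroup `Λ`. For comparison,
cover a compact `K` by finitely many translates `x • U₀` and choose as many pairwise disjoint
open slots in `V`, which exist because `Γ` is Hausdorff without isolated points; some `αᵏ`
shrinks `U₀` into any identity neighbourhood, and density of `Λ` then moves `x • U₀` into a
prescribed slot. Comparison forces an invariant regular probability measure to give full measure
to every nonempty open set, which two disjoint nonempty open sets rule out.
-/

open Function MeasureTheory
open scoped Pointwise Topology

section Topology

variable {X : Type*} [TopologicalSpace X]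

lemma exists_pairwise_disjoint_nonempty_open_subsets [T2Space X] [PerfectSpace X] (n : ℕ)
    {V : Set X} (hV : IsOpen V) (hVne : V.Nonempty) :
    ∃ W : Fin n → Set X, (∀ i, IsOpen (W i) ∧ (W i).Nonempty ∧ W i ⊆ V) ∧
      Pairwise (Disjoint on W) := by
  obtain ⟨x, hx⟩ := hVne
  have hinf : V.Infinite := infinite_of_mem_nhds x (hV.mem_nhds hx)
  set p : Fin n ↪ X := (Fin.valEmbedding.trans (hinf.natEmbedding _)).trans (Embedding.subtype _)
  obtain ⟨U, hU, hdisj⟩ := (finite_range p).t2_separation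
  refine ⟨fun i => V ∩ U (p i),
    fun i => ⟨hV.inter (hU _).2, ⟨p i, (hinf.natEmbedding _ i).2, (hU _).1⟩, inter_subset_left⟩,
    fun i j hij => ?_⟩
  exact (hdisj (mem_range_self i) (mem_range_self j) (p.injective.ne hij)).mono
    inter_subset_right inter_subset_right

lemma nontrivial_of_not_discreteTopology [T1Space X] (hnd : ¬DiscreteTopology X) :
    Nontrivial X :=
  not_subsingleton_iff_nontrivial.1 fun _ => hnd inferInstance

end Topology

section Comparison

variable {G X : Type*} [TopologicalSpace X] {a : G → X → X}

lemma actOSubEq_of_forall_exists_image_subset [T2Space X] [PerfectSpace X]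
    (hpush : ∀ x : X, ∃ U, IsOpen U ∧ x ∈ U ∧
      ∀ W, IsOpen W → W.Nonempty → ∃ g, a g '' U ⊆ W)
    (U : Set X) {V : Set X} (hV : IsOpen V) (hVne : V.Nonempty) : ActOSubEq a U V := by
  intro K _ hK
  choose c hc hxc hcW using hpush
  obtain ⟨t, ht⟩ := hK.elim_finite_subcover c hc fun x _ => mem_iUnion.2 ⟨x, hxc x⟩
  set x : Fin t.card → X := fun i => t.equivFin.symm i
  obtain ⟨W, hW, hWdisj⟩ := exists_pairwise_disjoint_nonempty_open_subsets t.card hV hVne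
  choose g hg using fun i => hcW (x i) (W i) (hW i).1 (hW i).2.1
  refine ⟨t.card, c ∘ x, g, fun i => hc _, fun y hy => ?_, fun i => (hg i).trans (hW i).2.2,
    fun i j hij => (hWdisj hij).mono (hg i) (hg j)⟩
  obtain ⟨z, hzt, hyz⟩ := mem_iUnion₂.1 (ht hy)
  exact mem_iUnion.2 ⟨t.equivFin ⟨z, hzt⟩, by simpa [x] using hyz⟩

variable [MeasurableSpace X] [OpensMeasurableSpace X] {μ : Measure X}

lemma measure_le_of_actCSubEq (ha : ∀ g, IsOpenMap (a g))
    (hμ : ∀ g A, MeasurableSet A → μ (a g '' A) = μ A) {K V : Set X} (h : ActCSubEq a K V) :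
    μ K ≤ μ V := by
  obtain ⟨n, U, s, hU, hKU, hUV, hdisj⟩ := h
  calc μ K ≤ μ (⋃ i, U i) := measure_mono hKU
    _ ≤ ∑' i, μ (U i) := measure_iUnion_le _
    _ = ∑' i, μ (a (s i) '' U i) := tsum_congr fun i => (hμ _ _ (hU i).measurableSet).symm
    _ = μ (⋃ i, a (s i) '' U i) :=
      (measure_iUnion hdisj fun i => (ha _ _ (hU i)).measurableSet).symm
    _ ≤ μ V := measure_mono (iUnion_subset hUV)

lemma measure_univ_le_of_actOSubEq [μ.Regular] (ha : ∀ g, IsOpenMap (a g))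
    (hμ : ∀ g A, MeasurableSet A → μ (a g '' A) = μ A) {V : Set X} (h : ActOSubEq a univ V) :
    μ univ ≤ μ V := by
  rw [isOpen_univ.measure_eq_iSup_isCompact]
  exact iSup₂_le fun K hK => iSup_le fun hKc => measure_le_of_actCSubEq ha hμ (h K hK hKc)

lemma not_exists_invariant_probabilityMeasure_of_actOSubEq [T2Space X] [Nontrivial X]
    (ha : ∀ g, IsOpenMap (a g))
    (hcomp : ∀ V : Set X, IsOpen V → V.Nonempty → ActOSubEq a univ V) :
    ¬∃ μ : Measure X, IsProbabilityMeasure μ ∧ μ.Regular ∧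
      ∀ g A, MeasurableSet A → μ (a g '' A) = μ A := by
  rintro ⟨μ, _, _, hμ⟩
  obtain ⟨x, y, hxy⟩ := exists_pair_ne X
  obtain ⟨V, W, hV, hW, hxV, hyW, hVW⟩ := t2_separation hxy
  have hVle := measure_univ_le_of_actOSubEq ha hμ (hcomp V hV ⟨x, hxV⟩)
  have hWle := measure_univ_le_of_actOSubEq ha hμ (hcomp W hW ⟨y, hyW⟩)
  rw [measure_univ] at hVle hWle
  have h21 : (2 : ENNReal) ≤ 1 := calc
    2 = 1 + 1 := one_add_one_eq_two.symm
    _ ≤ μ V + μ W := add_le_add hVle hWle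
    _ = μ (V ∪ W) := (measure_union hVW hW.measurableSet).symm
    _ ≤ 1 := prob_le_one
  norm_num at h21

end Comparison

section Group

variable {Γ : Type*} [Group Γ] [TopologicalSpace Γ]

lemma perfectSpace_of_not_discreteTopology [IsTopologicalGroup Γ] (hnd : ¬DiscreteTopology Γ) :
    PerfectSpace Γ :=
  perfectSpace_iff_forall_not_isolated.2 fun x => ⟨fun h =>
    hnd ((MulAction.IsPretransitive.discreteTopology_iff Γ x).2
      (isOpen_singleton_iff_punctured_nhds x |>.2 h))⟩

lemma MulAut.isHomeomorph_zpow {α : MulAut Γ} (hα : Continuous α) (hα' : Continuous ⇑α⁻¹)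
    (k : ℤ) : IsHomeomorph ⇑(α ^ k) := by
  let S : Subgroup (MulAut Γ) :=
    { carrier := {f | Continuous f ∧ Continuous ⇑f⁻¹}
      mul_mem' := fun hf hg => ⟨hf.1.comp hg.1, by rw [mul_inv_rev]; exact hg.2.comp hf.2⟩
      one_mem' := ⟨continuous_id, continuous_id⟩
      inv_mem' := fun hf => ⟨hf.2, by rw [inv_inv]; exact hf.1⟩ }
  obtain ⟨hc, hc'⟩ : α ^ k ∈ S := S.zpow_mem ⟨hα, hα'⟩ k
  exact ⟨hc, IsOpenMap.of_inverse hc' (α ^ k).right_inv (α ^ k).left_inv,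
    (α ^ k).bijective⟩

lemma dense_range_mul_zpow_apply [ContinuousMul Γ] {Λ : Subgroup Γ} (hΛ : Dense (Λ : Set Γ))
    (α : MulAut Γ) (x : Γ) : Dense (range fun p : Λ × ℤ => (p.1 : Γ) * (α ^ p.2) x) := by
  refine (((mul_right_surjective x).denseRange.dense_image (continuous_mul_const x) hΛ)).mono ?_
  rintro _ ⟨l, hl, rfl⟩
  exact ⟨(⟨l, hl⟩, 0), by simp⟩

lemma exists_mul_zpow_image_smul_subset [IsTopologicalGroup Γ] {Λ : Subgroup Γ}
    (hΛ : Dense (Λ : Set Γ)) {α : MulAut Γ} {U₀ : Set Γ}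
    (hbase : ∀ O ∈ 𝓝 (1 : Γ), ∃ k : ℤ, ⇑(α ^ k) '' U₀ ⊆ O) (x : Γ) {W : Set Γ}
    (hW : IsOpen W) (hWne : W.Nonempty) :
    ∃ p : Λ × ℤ, (fun g => (p.1 : Γ) * (α ^ p.2) g) '' (x • U₀) ⊆ W := by
  obtain ⟨v, hv⟩ := hWne
  obtain ⟨P, hP, hP1, hPP⟩ := exists_open_nhds_one_mul_subset
    ((hW.preimage (continuous_const_mul v)).mem_nhds (by simpa using hv))
  obtain ⟨k, hk⟩ := hbase P (hP.mem_nhds hP1)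
  obtain ⟨l, hlΛ, hl⟩ := hΛ.exists_mem_open
    ((hP.preimage (continuous_const_mul v⁻¹)).preimage (continuous_mul_const ((α ^ k) x)))
    ⟨v * ((α ^ k) x)⁻¹, by simpa [mul_assoc] using hP1⟩
  refine ⟨(⟨l, hlΛ⟩, k), ?_⟩
  rintro _ ⟨_, ⟨u, hu, rfl⟩, rfl⟩
  have key : l * (α ^ k) (x * u) = v * ((v⁻¹ * (l * (α ^ k) x)) * (α ^ k) u) := by
    rw [map_mul]; group
  show l * (α ^ k) (x * u) ∈ W
  rw [key]
  exact hPP (mul_mem_mul hl (hk (mem_image_of_mem _ hu)))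

end Group

theorem semidirect_action_minimal_comparison_general {Γ : Type*} [Group Γ] [TopologicalSpace Γ]
    [IsTopologicalGroup Γ] [T2Space Γ]
    [MeasurableSpace Γ] [BorelSpace Γ]
    (hnd : ¬DiscreteTopology Γ)
    (Λ : Subgroup Γ) (hΛdense : Dense (Λ : Set Γ))
    (α : MulAut Γ) (hαc : Continuous ⇑α) (hαc' : Continuous ⇑α⁻¹)
    (U₀ : Set Γ) (hU₀open : IsOpen U₀) (hU₀mem : (1 : Γ) ∈ U₀)
    (hbase : ∀ O ∈ nhds (1 : Γ), ∃ k : ℤ, ⇑(α ^ k) '' U₀ ⊆ O) :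
    (∀ x : Γ, Dense (Set.range fun p : ↥Λ × ℤ => (p.1 : Γ) * (α ^ p.2) x)) ∧
    (∀ U V : Set Γ, IsOpen U → IsOpen V → U.Nonempty → V.Nonempty →
      ActOSubEq (fun (p : ↥Λ × ℤ) (g : Γ) => (p.1 : Γ) * (α ^ p.2) g) U V) ∧
    ¬∃ μ : MeasureTheory.Measure Γ, MeasureTheory.IsProbabilityMeasure μ ∧ μ.Regular ∧
      ∀ (p : ↥Λ × ℤ) (A : Set Γ), MeasurableSet A →
        μ ((fun g : Γ => (p.1 : Γ) * (α ^ p.2) g) '' A) = μ A := by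
  have := perfectSpace_of_not_discreteTopology hnd
  have := nontrivial_of_not_discreteTopology hnd
  have hcomp : ∀ U V : Set Γ, IsOpen V → V.Nonempty →
      ActOSubEq (fun (p : ↥Λ × ℤ) (g : Γ) => (p.1 : Γ) * (α ^ p.2) g) U V :=
    actOSubEq_of_forall_exists_image_subset fun x =>
      ⟨x • U₀, hU₀open.smul x, by simpa using smul_mem_smul_set (a := x) hU₀mem,
        fun _ hW hWne => exists_mul_zpow_image_smul_subset hΛdense hbase x hW hWne⟩
  have hopen (p : ↥Λ × ℤ) : IsOpenMap fun g : Γ => (p.1 : Γ) * (α ^ p.2) g :=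
    (isOpenMap_mul_left _).comp (MulAut.isHomeomorph_zpow hαc hαc' p.2).isOpenMap
  exact ⟨dense_range_mul_zpow_apply hΛdense α, fun U V _ hV _ hVne => hcomp U V hV hVne,
    not_exists_invariant_probabilityMeasure_of_actOSubEq hopen fun V hV hVne =>
      hcomp univ V hV hVne⟩

theorem semidirect_action_minimal_comparison {Γ : Type*} [Group Γ] [TopologicalSpace Γ]
    [IsTopologicalGroup Γ] [LocallyCompactSpace Γ] [T2Space Γ]
    [MeasurableSpace Γ] [BorelSpace Γ]
    (hnd : ¬DiscreteTopology Γ)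
    (Λ : Subgroup Γ) (hΛdense : Dense (Λ : Set Γ))
    (α : MulAut Γ) (hαc : Continuous ⇑α) (hαc' : Continuous ⇑α⁻¹)
    (hαΛ : Subgroup.map α.toMonoidHom Λ = Λ)
    (U₀ : Set Γ) (hU₀open : IsOpen U₀) (hU₀mem : (1 : Γ) ∈ U₀)
    (hbase : ∀ O ∈ nhds (1 : Γ), ∃ k : ℤ, ⇑(α ^ k) '' U₀ ⊆ O) :
    (∀ x : Γ, Dense (Set.range fun p : ↥Λ × ℤ => (p.1 : Γ) * (α ^ p.2) x)) ∧
    (∀ U V : Set Γ, IsOpen U → IsOpen V → U.Nonempty → V.Nonempty →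
      ActOSubEq (fun (p : ↥Λ × ℤ) (g : Γ) => (p.1 : Γ) * (α ^ p.2) g) U V) ∧
    ¬∃ μ : MeasureTheory.Measure Γ, MeasureTheory.IsProbabilityMeasure μ ∧ μ.Regular ∧
      ∀ (p : ↥Λ × ℤ) (A : Set Γ), MeasurableSet A →
        μ ((fun g : Γ => (p.1 : Γ) * (α ^ p.2) g) '' A) = μ A :=
  semidirect_action_minimal_comparison_general hnd Λ hΛdense α hαc hαc' U₀ hU₀open hU₀mem hbase
end

section
/- Let g be a homeomorphism of a locally compact Hausdorff space X and let x be an asymptotically stable fixed point of g. Then x is an attractor of g, i.e. there exists an open neighborhood W of x such that {gⁿ(W) : n ∈ ℕ} forms a neighborhood base at x (for every neighborhood O of x there is n ∈ ℕ with gⁿ(W) ⊆ O). -/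
/-!
Take for `W` the interior of a compact neighbourhood `K` of `x` inside the basin of attraction.
Given a neighbourhood `O`, stability yields a smaller neighbourhood `S` that never leaves `O`
under forward iteration. Every point of `K` eventually enters the interior of `S`; by
compactness a single bound `N` on the entry time works for all of `K`, and once inside `S`
an orbit stays in `O`, so `gᴺ(K) ⊆ O`.
-/

open Set Filter

section Iterate

variable {X : Type*} {f : X → X}

theorem iterate_mem_of_iterate_mem_of_le {S O : Set X} (hSO : ∀ n, f^[n] '' S ⊆ O)
    {m N : ℕ} (hmN : m ≤ N) {y : X} (hy : f^[m] y ∈ S) : f^[N] y ∈ O := by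
  rw [← Nat.sub_add_cancel hmN, Function.iterate_add_apply]
  exact hSO (N - m) (mem_image_of_mem _ hy)

variable [TopologicalSpace X]

theorem IsCompact.exists_forall_exists_iterate_mem_of_le {K V : Set X} (hK : IsCompact K)
    (hf : Continuous f) (hV : IsOpen V) (hKV : ∀ y ∈ K, ∃ n, f^[n] y ∈ V) :
    ∃ N, ∀ y ∈ K, ∃ n ≤ N, f^[n] y ∈ V := by
  obtain ⟨t, ht⟩ := hK.elim_finite_subcover (fun n => f^[n] ⁻¹' V)
    (fun n => hV.preimage (hf.iterate n)) fun y hy => mem_iUnion.2 (hKV y hy)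
  refine ⟨t.sup id, fun y hy => ?_⟩
  obtain ⟨n, hnt, hyn⟩ := mem_iUnion₂.1 (ht hy)
  exact ⟨n, Finset.le_sup (f := id) hnt, hyn⟩

theorem IsCompact.exists_iterate_image_subset {K S O : Set X} (hK : IsCompact K)
    (hf : Continuous f) (hSO : ∀ n, f^[n] '' S ⊆ O)
    (hKS : ∀ y ∈ K, ∃ n, f^[n] y ∈ interior S) : ∃ N, f^[N] '' K ⊆ O := by
  obtain ⟨N, hN⟩ := hK.exists_forall_exists_iterate_mem_of_le hf isOpen_interior hKS
  refine ⟨N, image_subset_iff.2 fun y hy => ?_⟩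
  obtain ⟨n, hnN, hyn⟩ := hN y hy
  exact iterate_mem_of_iterate_mem_of_le hSO hnN (interior_subset hyn)

end Iterate

theorem asymptoticallyStable_is_attractor_general {X : Type*} [TopologicalSpace X]
    [LocallyCompactSpace X]
    (g : X ≃ₜ X) (x : X)
    (hstable : ∀ U₁ ∈ nhds x, ∃ U₂ ∈ nhds x, U₂ ⊆ U₁ ∧ ∀ n : ℕ, (⇑g)^[n] '' U₂ ⊆ U₁)
    (hasymp : ∃ U ∈ nhds x, ∀ y ∈ U,
      Filter.Tendsto (fun n : ℕ => (⇑g)^[n] y) Filter.atTop (nhds x)) :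
    ∃ W : Set X, IsOpen W ∧ x ∈ W ∧ ∀ O ∈ nhds x, ∃ n : ℕ, (⇑g)^[n] '' W ⊆ O := by
  obtain ⟨U, hU, hconv⟩ := hasymp
  obtain ⟨K, hK, hKU, hKc⟩ := local_compact_nhds hU
  refine ⟨interior K, isOpen_interior, mem_interior_iff_mem_nhds.2 hK, fun O hO => ?_⟩
  obtain ⟨S, hS, -, hSO⟩ := hstable O hO
  have hentry : ∀ y ∈ K, ∃ n, (⇑g)^[n] y ∈ interior S := fun y hy =>
    ((hconv y (hKU hy)).eventually_mem (interior_mem_nhds.2 hS)).exists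
  obtain ⟨N, hN⟩ := hKc.exists_iterate_image_subset g.continuous hSO hentry
  exact ⟨N, (image_mono interior_subset).trans hN⟩

theorem asymptoticallyStable_is_attractor {X : Type*} [TopologicalSpace X]
    [LocallyCompactSpace X] [T2Space X]
    (g : X ≃ₜ X) (x : X) (hfix : g x = x)
    (hstable : ∀ U₁ ∈ nhds x, ∃ U₂ ∈ nhds x, U₂ ⊆ U₁ ∧ ∀ n : ℕ, (⇑g)^[n] '' U₂ ⊆ U₁)
    (hasymp : ∃ U ∈ nhds x, ∀ y ∈ U,
      Filter.Tendsto (fun n : ℕ => (⇑g)^[n] y) Filter.atTop (nhds x)) :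
    ∃ W : Set X, IsOpen W ∧ x ∈ W ∧ ∀ O ∈ nhds x, ∃ n : ℕ, (⇑g)^[n] '' W ⊆ O :=
  asymptoticallyStable_is_attractor_general g x hstable hasymp
end

section
/- Let X = {0,1}^ℕ with the product topology, and let φ, ψ be the homeomorphisms of X defined by φ(x₁,x₂,x₃,…) = (1−x₁,x₂,x₃,…) and ψ(0,x₂,x₃,…) = (1,1,x₂,x₃,…), ψ(1,1,x₂,x₃,…) = (1,0,x₂,x₃,…), ψ(1,0,x₂,x₃,…) = (0,x₂,x₃,…). Let G be the subgroup of the homeomorphism group of X generated by φ and ψ. Then for every nonempty open set O ⊆ X one has X ≺ O with respect to the G-action, and there is no G-invariant regular Borel probability measure on X. -/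
/-!
Write `[w]` for the cylinder of sequences beginning with the word `w` (`false` = 0, `true` = 1).
The nonempty cylinders form a single `G`-orbit: `φ` toggles the first letter, `ψ` carries
`[0 s]` to `[1 1 s]` and `[1 1 s]` to `[1 0 s]`, and together these turn `[0 s]` into `[0 a s]`
for either letter `a`. Given `[w] ⊆ O`, the two halves `[0]` and `[1]` of `X` are therefore carried
onto the disjoint subcylinders `[w 0]` and `[w 1]` of `O`. An invariant measure would give every
nonempty cylinder the same mass `m`, and `[1] = [1 0] ⊔ [1 1]` forces `m = 2m`, so `m = 0` and
`μ X = μ [0] + μ [1] = 0`.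
-/

open Set

open MeasureTheory

def wordCylinder : List Bool → Set (ℕ → Bool)
  | [] => univ
  | a :: w => (· 0) ⁻¹' {a} ∩ (fun x n => x (n + 1)) ⁻¹' wordCylinder w

@[simp] lemma wordCylinder_nil : wordCylinder [] = univ := rfl

@[simp] lemma mem_wordCylinder_cons {a : Bool} {w : List Bool} {x : ℕ → Bool} :
    x ∈ wordCylinder (a :: w) ↔ x 0 = a ∧ (fun n => x (n + 1)) ∈ wordCylinder w := Iff.rfl

lemma isOpen_wordCylinder : ∀ w, IsOpen (wordCylinder w)
  | [] => isOpen_univ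
  | a :: w => ((isOpen_discrete {a}).preimage (continuous_apply 0)).inter
      ((isOpen_wordCylinder w).preimage (continuous_pi fun n => continuous_apply (n + 1)))

lemma measurableSet_wordCylinder : ∀ w, MeasurableSet (wordCylinder w)
  | [] => MeasurableSet.univ
  | a :: w => ((measurableSet_singleton a).preimage (measurable_pi_apply 0)).inter
      ((measurableSet_wordCylinder w).preimage
        (measurable_pi_lambda _ fun n => measurable_pi_apply (n + 1)))

lemma wordCylinder_ofFn (x : ℕ → Bool) (n : ℕ) :
    wordCylinder (List.ofFn fun i : Fin n => x i) = PiNat.cylinder x n := by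
  induction n generalizing x with
  | zero => simp [PiNat.cylinder]
  | succ n ih =>
    ext y
    simp only [List.ofFn_succ, mem_wordCylinder_cons, Fin.val_succ, Fin.val_zero,
      ih fun k => x (k + 1), PiNat.mem_cylinder_iff, Nat.forall_lt_succ_left]

lemma IsOpen.exists_wordCylinder_subset {O : Set (ℕ → Bool)} (hO : IsOpen O)
    (hne : O.Nonempty) : ∃ w, wordCylinder w ⊆ O := by
  obtain ⟨x, hx⟩ := hne
  obtain ⟨_, ⟨y, n, rfl⟩, -, hsub⟩ :=
    (PiNat.isTopologicalBasis_cylinders _).exists_subset_of_mem_open hx hO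
  exact ⟨List.ofFn fun i : Fin n => y i, wordCylinder_ofFn y n ▸ hsub⟩

lemma wordCylinder_eq_union_append :
    ∀ w, wordCylinder w = wordCylinder (w ++ [false]) ∪ wordCylinder (w ++ [true])
  | [] => by ext x; cases x 0 <;> simp
  | a :: w => by
    rw [wordCylinder, wordCylinder_eq_union_append w, preimage_union, inter_union_distrib_left]
    rfl

lemma disjoint_wordCylinder_append :
    ∀ w, Disjoint (wordCylinder (w ++ [false])) (wordCylinder (w ++ [true]))
  | [] => by simp [Set.disjoint_left]
  | a :: w => Set.disjoint_left.2 fun x hf ht =>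
      Set.disjoint_left.1 (disjoint_wordCylinder_append w) hf.2 ht.2

lemma wordCylinder_append_subset (w : List Bool) (b : Bool) :
    wordCylinder (w ++ [b]) ⊆ wordCylinder w := by
  rw [wordCylinder_eq_union_append w]; cases b
  · exact subset_union_left
  · exact subset_union_right

lemma measure_wordCylinder_eq_add (μ : Measure (ℕ → Bool)) (w : List Bool) :
    μ (wordCylinder w) = μ (wordCylinder (w ++ [false])) + μ (wordCylinder (w ++ [true])) := by
  conv_lhs => rw [wordCylinder_eq_union_append w]
  exact measure_union (disjoint_wordCylinder_append w) (measurableSet_wordCylinder _)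

def IsTranslate {α : Type*} (H : Subgroup (Equiv.Perm α)) (A B : Set α) : Prop :=
  ∃ g ∈ H, g '' A = B

namespace IsTranslate

variable {α : Type*} {H : Subgroup (Equiv.Perm α)} {A B C : Set α}

@[refl] lemma refl (A : Set α) : IsTranslate H A A := ⟨1, H.one_mem, image_id A⟩

lemma symm : IsTranslate H A B → IsTranslate H B A
  | ⟨g, hg, h⟩ => ⟨g⁻¹, H.inv_mem hg, by rw [← h]; exact g.symm_image_image A⟩

lemma trans : IsTranslate H A B → IsTranslate H B C → IsTranslate H A C
  | ⟨g, hg, hAB⟩, ⟨g', hg', hBC⟩ => ⟨g' * g, H.mul_mem hg' hg, by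
      rw [Equiv.Perm.coe_mul, image_comp, hAB, hBC]⟩

lemma of_preimage_eq {g : Equiv.Perm α} (hg : g ∈ H) (h : g ⁻¹' B = A) : IsTranslate H A B :=
  ⟨g, hg, h ▸ g.image_preimage B⟩

lemma measure_eq [MeasurableSpace α] {μ : Measure α}
    (hμ : ∀ g ∈ H, ∀ A, MeasurableSet A → μ (g '' A) = μ A) (hA : MeasurableSet A)
    (h : IsTranslate H A B) : μ A = μ B := by
  obtain ⟨g, hg, rfl⟩ := h
  exact (hμ g hg A hA).symm

end IsTranslate

section Generators

variable {f : (ℕ → Bool) → ℕ → Bool}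

lemma preimage_wordCylinder_cons_of_flip (hf : ∀ x, f x = fun n => if n = 0 then !x 0 else x n)
    (a : Bool) (s : List Bool) : f ⁻¹' wordCylinder (a :: s) = wordCylinder ((!a) :: s) := by
  ext x
  simp [hf, Bool.eq_not_iff]

lemma preimage_wordCylinder_true_true
    (h₀ : ∀ x : ℕ → Bool, x 0 = false →
      f x 0 = true ∧ f x 1 = true ∧ ∀ n : ℕ, f x (n + 2) = x (n + 1))
    (h₁ : ∀ x : ℕ → Bool, x 0 = true → x 1 = true →
      f x 0 = true ∧ f x 1 = false ∧ ∀ n : ℕ, f x (n + 2) = x (n + 2))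
    (h₂ : ∀ x : ℕ → Bool, x 0 = true → x 1 = false →
      f x 0 = false ∧ ∀ n : ℕ, f x (n + 1) = x (n + 2))
    (s : List Bool) :
    f ⁻¹' wordCylinder (true :: true :: s) = wordCylinder (false :: s) := by
  ext x
  rcases hx0 : x 0 with _ | _
  · simp [hx0, h₀ x hx0]
  rcases hx1 : x 1 with _ | _
  · simp [hx0, (h₂ x hx0 hx1).1]
  · simp [hx0, (h₁ x hx0 hx1).2.1]

lemma preimage_wordCylinder_true_false
    (h₀ : ∀ x : ℕ → Bool, x 0 = false →
      f x 0 = true ∧ f x 1 = true ∧ ∀ n : ℕ, f x (n + 2) = x (n + 1))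
    (h₁ : ∀ x : ℕ → Bool, x 0 = true → x 1 = true →
      f x 0 = true ∧ f x 1 = false ∧ ∀ n : ℕ, f x (n + 2) = x (n + 2))
    (h₂ : ∀ x : ℕ → Bool, x 0 = true → x 1 = false →
      f x 0 = false ∧ ∀ n : ℕ, f x (n + 1) = x (n + 2))
    (s : List Bool) :
    f ⁻¹' wordCylinder (true :: false :: s) = wordCylinder (true :: true :: s) := by
  ext x
  rcases hx0 : x 0 with _ | _
  · simp [hx0, (h₀ x hx0).2.1]
  rcases hx1 : x 1 with _ | _
  · simp [hx0, hx1, (h₂ x hx0 hx1).1]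
  · simp [hx0, hx1, h₁ x hx0 hx1]

end Generators

lemma isTranslate_wordCylinder {H : Subgroup (Equiv.Perm (ℕ → Bool))}
    (hflip : ∀ a s, IsTranslate H (wordCylinder ((!a) :: s)) (wordCylinder (a :: s)))
    (hpush : ∀ s, IsTranslate H (wordCylinder (false :: s)) (wordCylinder (true :: true :: s)))
    (hturn : ∀ s,
      IsTranslate H (wordCylinder (true :: true :: s)) (wordCylinder (true :: false :: s)))
    {u v : List Bool} (hu : u ≠ []) (hv : v ≠ []) :
    IsTranslate H (wordCylinder u) (wordCylinder v) := by
  have insert_second :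
      ∀ a s, IsTranslate H (wordCylinder (false :: s)) (wordCylinder (false :: a :: s))
    | true, s => (hpush s).trans (hflip false _)
    | false, s => ((hpush s).trans (hturn s)).trans (hflip false _)
  have false_to_false_cons :
      ∀ s, IsTranslate H (wordCylinder [false]) (wordCylinder (false :: s)) := by
    intro s
    induction s with
    | nil => rfl
    | cons a s ih => exact ih.trans (insert_second a s)
  have false_to_cons : ∀ a s, IsTranslate H (wordCylinder [false]) (wordCylinder (a :: s))
    | false, s => false_to_false_cons s
    | true, s => (false_to_false_cons s).trans (hflip true s)
  obtain ⟨a, s, rfl⟩ := List.exists_cons_of_ne_nil hu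
  obtain ⟨b, t, rfl⟩ := List.exists_cons_of_ne_nil hv
  exact (false_to_cons a s).symm.trans (false_to_cons b t)

lemma actCSubEq_of_two {G X : Type*} [TopologicalSpace X] {a : G → X → X} {K V U₀ U₁ : Set X}
    (s₀ s₁ : G) (hU₀ : IsOpen U₀) (hU₁ : IsOpen U₁) (hK : K ⊆ U₀ ∪ U₁)
    (hV₀ : a s₀ '' U₀ ⊆ V) (hV₁ : a s₁ '' U₁ ⊆ V) (hd : Disjoint (a s₀ '' U₀) (a s₁ '' U₁)) :
    ActCSubEq a K V := by
  refine ⟨2, ![U₀, U₁], ![s₀, s₁], ?_, ?_, ?_, ?_⟩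
  · exact Fin.forall_fin_two.2 ⟨hU₀, hU₁⟩
  · exact hK.trans (union_subset (subset_iUnion ![U₀, U₁] 0) (subset_iUnion ![U₀, U₁] 1))
  · exact Fin.forall_fin_two.2 ⟨hV₀, hV₁⟩
  · intro i j hij
    fin_cases i <;> fin_cases j <;> simp_all [hd.symm]

lemma actCSubEq_univ_of_isTranslate {H : Subgroup (Equiv.Perm (ℕ → Bool))}
    (hH : ∀ u v : List Bool, u ≠ [] → v ≠ [] → IsTranslate H (wordCylinder u) (wordCylinder v))
    {O : Set (ℕ → Bool)} (hO : IsOpen O) (hne : O.Nonempty) :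
    ActCSubEq (fun (g : H) x => (g : Equiv.Perm (ℕ → Bool)) x) univ O := by
  obtain ⟨w, hw⟩ := hO.exists_wordCylinder_subset hne
  obtain ⟨g₀, hg₀, h₀⟩ := hH [false] (w ++ [false]) (by simp) (by simp)
  obtain ⟨g₁, hg₁, h₁⟩ := hH [true] (w ++ [true]) (by simp) (by simp)
  refine actCSubEq_of_two ⟨g₀, hg₀⟩ ⟨g₁, hg₁⟩ (isOpen_wordCylinder _) (isOpen_wordCylinder _)
    (wordCylinder_eq_union_append []).subset ?_ ?_ ?_
  · exact h₀.trans_subset ((wordCylinder_append_subset w false).trans hw)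
  · exact h₁.trans_subset ((wordCylinder_append_subset w true).trans hw)
  · exact h₀ ▸ h₁ ▸ disjoint_wordCylinder_append w

lemma not_isProbabilityMeasure_of_isTranslate {H : Subgroup (Equiv.Perm (ℕ → Bool))}
    (hH : ∀ u v : List Bool, u ≠ [] → v ≠ [] → IsTranslate H (wordCylinder u) (wordCylinder v))
    {μ : Measure (ℕ → Bool)} (hμ : ∀ g ∈ H, ∀ A, MeasurableSet A → μ (g '' A) = μ A) :
    ¬IsProbabilityMeasure μ := by
  intro _
  set m := μ (wordCylinder [false])
  have hm : ∀ w ≠ [], μ (wordCylinder w) = m := fun w hw =>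
    ((hH _ _ (by simp) hw).measure_eq hμ (measurableSet_wordCylinder _)).symm
  have hm0 : m = 0 := by
    have h := measure_wordCylinder_eq_add μ [true]
    rw [hm _ (by simp), hm _ (by simp), hm _ (by simp)] at h
    exact ((ENNReal.add_right_inj (measure_ne_top μ _)).1 (h.symm.trans (add_zero m).symm))
  have h := measure_wordCylinder_eq_add μ []
  simp [hm, hm0] at h

theorem cantor_action_comparison
    (φ ψ : (ℕ → Bool) ≃ₜ (ℕ → Bool))
    (hφ : ∀ (x : ℕ → Bool), φ x = fun n => if n = 0 then !x 0 else x n)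
    (hψ₀ : ∀ x : ℕ → Bool, x 0 = false →
      ψ x 0 = true ∧ ψ x 1 = true ∧ ∀ n : ℕ, ψ x (n + 2) = x (n + 1))
    (hψ₁ : ∀ x : ℕ → Bool, x 0 = true → x 1 = true →
      ψ x 0 = true ∧ ψ x 1 = false ∧ ∀ n : ℕ, ψ x (n + 2) = x (n + 2))
    (hψ₂ : ∀ x : ℕ → Bool, x 0 = true → x 1 = false →
      ψ x 0 = false ∧ ∀ n : ℕ, ψ x (n + 1) = x (n + 2)) :
    (∀ O : Set (ℕ → Bool), IsOpen O → O.Nonempty →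
      ActCSubEq
        (fun (g : ↥(Subgroup.closure ({φ.toEquiv, ψ.toEquiv} : Set (Equiv.Perm (ℕ → Bool)))))
           (x : ℕ → Bool) => (g : Equiv.Perm (ℕ → Bool)) x)
        Set.univ O) ∧
    ¬∃ μ : MeasureTheory.Measure (ℕ → Bool),
      MeasureTheory.IsProbabilityMeasure μ ∧ μ.Regular ∧
        ∀ g ∈ Subgroup.closure ({φ.toEquiv, ψ.toEquiv} : Set (Equiv.Perm (ℕ → Bool))),
          ∀ A : Set (ℕ → Bool), MeasurableSet A → μ (g '' A) = μ A := by
  set G := Subgroup.closure ({φ.toEquiv, ψ.toEquiv} : Set (Equiv.Perm (ℕ → Bool)))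
  have hφG : φ.toEquiv ∈ G := Subgroup.subset_closure (by simp)
  have hψG : ψ.toEquiv ∈ G := Subgroup.subset_closure (by simp)
  have hG : ∀ u v : List Bool, u ≠ [] → v ≠ [] →
      IsTranslate G (wordCylinder u) (wordCylinder v) :=
    fun _ _ => isTranslate_wordCylinder
      (fun a s => .of_preimage_eq hφG (preimage_wordCylinder_cons_of_flip hφ a s))
      (fun s => .of_preimage_eq hψG (preimage_wordCylinder_true_true hψ₀ hψ₁ hψ₂ s))
      (fun s => .of_preimage_eq hψG (preimage_wordCylinder_true_false hψ₀ hψ₁ hψ₂ s))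
  exact ⟨fun O hO hne => actCSubEq_univ_of_isTranslate hG hO hne,
    fun ⟨_, hprob, _, hμ⟩ => not_isProbabilityMeasure_of_isTranslate hG hμ hprob⟩
end

section
/- Let X = {0,1}^ℕ with the product topology, and let φ, ψ be the homeomorphisms of X defined by φ(x₁,x₂,x₃,…) = (1−x₁,x₂,x₃,…) and ψ(0,x₂,x₃,…) = (1,1,x₂,x₃,…), ψ(1,1,x₂,x₃,…) = (1,0,x₂,x₃,…), ψ(1,0,x₂,x₃,…) = (0,x₂,x₃,…). Then for every n ≥ 1 and every word (z₁,…,zₙ) ∈ {0,1}ⁿ, there exists an element g of the subgroup of the homeomorphism group of X generated by φ and ψ such that g(N₀) = N_{z₁…zₙ}. -/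
/-!
Read on prefixes, φ rewrites `b ↦ !b`, and ψ rewrites `0 ↦ 11` and `11 ↦ 10`; a prefix rule
`u ↦ v` maps the cylinder `N_{uw}` onto `N_{vw}`. Induction on `w`: from `N_{0w}` the rules
`0 ↦ 11 ↦ 10` reach `N_{1cw}` for both letters `c`, and φ then adjusts the first letter.
-/

open Set MulAction Pointwise

-- `Stream' α` is `ℕ → α` by definition, so the cylinders serve directly as subsets of `ℕ → Bool`.
def cylinder {α : Type*} (w : List α) : Set (Stream' α) := range (w ++ₛ ·)

section Cylinder

variable {α : Type*}

theorem mem_cylinder_iff {w : List α} {x : Stream' α} :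
    x ∈ cylinder w ↔ ∀ (i : ℕ) (hi : i < w.length), x i = w[i] := by
  constructor
  · rintro ⟨s, rfl⟩ i hi
    exact Stream'.get_append_left i w s hi
  · intro hx
    have htake : Stream'.take w.length x = w :=
      List.ext_getElem (by simp) fun i _ hi => by rw [Stream'.take_get]; exact hx i hi
    refine ⟨Stream'.drop w.length x, ?_⟩
    conv_rhs => rw [← Stream'.append_take_drop w.length x, htake]

theorem cylinder_ofFn {n : ℕ} (z : Fin n → α) :
    cylinder (List.ofFn z) = {x | ∀ i : Fin n, x i = z i} := by
  ext x
  simp only [mem_cylinder_iff, List.length_ofFn, List.getElem_ofFn, mem_ofPred_eq]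
  exact ⟨fun h i => h i i.isLt, fun h i hi => h ⟨i, hi⟩⟩

theorem cylinder_singleton (a : α) : cylinder [a] = {x | x 0 = a} := by
  simpa using cylinder_ofFn ![a]

theorem image_cylinder_append {e : Stream' α → Stream' α} {u v : List α}
    (he : ∀ x, e (u ++ₛ x) = v ++ₛ x) (w : List α) :
    e '' cylinder (u ++ w) = cylinder (v ++ w) := by
  simp only [cylinder, ← range_comp, Function.comp_def, Stream'.append_append_stream, he]

end Cylinder

section Orbit

variable {α : Type*} {H : Subgroup (Equiv.Perm α)} {A B : Set α}

theorem mem_orbit_set_iff : B ∈ orbit H A ↔ ∃ g ∈ H, g '' A = B := by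
  simp only [mem_orbit_iff, Subtype.exists, Subgroup.mk_smul, ← image_smul, Equiv.Perm.smul_def,
    exists_prop]

theorem image_mem_orbit {g : Equiv.Perm α} (hg : g ∈ H) (hB : B ∈ orbit H A) :
    g '' B ∈ orbit H A := by
  obtain ⟨g', hg', rfl⟩ := mem_orbit_set_iff.mp hB
  exact mem_orbit_set_iff.mpr ⟨g * g', mul_mem hg hg', image_comp g g' A⟩

end Orbit

theorem cylinder_cons_mem_orbit {φ ψ : Equiv.Perm (Stream' Bool)}
    {H : Subgroup (Equiv.Perm (Stream' Bool))} (hφH : φ ∈ H) (hψH : ψ ∈ H)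
    (hφ : ∀ b x, φ ([b] ++ₛ x) = [!b] ++ₛ x)
    (hψ₀ : ∀ x, ψ ([false] ++ₛ x) = [true, true] ++ₛ x)
    (hψ₁ : ∀ x, ψ ([true, true] ++ₛ x) = [true, false] ++ₛ x) (w : List Bool) (b : Bool) :
    cylinder (b :: w) ∈ orbit H (cylinder [false]) := by
  have flip_head : ∀ {b w}, cylinder (b :: w) ∈ orbit H (cylinder [false]) →
      cylinder ((!b) :: w) ∈ orbit H (cylinder [false]) := fun {b w} h =>
    image_cylinder_append (hφ b) w ▸ image_mem_orbit hφH h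
  induction w generalizing b with
  | nil =>
    cases b
    · exact mem_orbit_self _
    · exact flip_head (mem_orbit_self _)
  | cons c w ih =>
    have h₁₁ : cylinder (true :: true :: w) ∈ orbit H (cylinder [false]) :=
      image_cylinder_append hψ₀ w ▸ image_mem_orbit hψH (ih false)
    have h₁c : cylinder (true :: c :: w) ∈ orbit H (cylinder [false]) := by
      cases c
      · exact image_cylinder_append hψ₁ w ▸ image_mem_orbit hψH h₁₁
      · exact h₁₁
    cases b
    · exact flip_head h₁c
    · exact h₁c

theorem cantor_cylinder_transitivity_general
    (φ ψ : (ℕ → Bool) ≃ₜ (ℕ → Bool))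
    (hφ : ∀ (x : ℕ → Bool), φ x = fun n => if n = 0 then !x 0 else x n)
    (hψ₀ : ∀ x : ℕ → Bool, x 0 = false →
      ψ x 0 = true ∧ ψ x 1 = true ∧ ∀ n : ℕ, ψ x (n + 2) = x (n + 1))
    (hψ₁ : ∀ x : ℕ → Bool, x 0 = true → x 1 = true →
      ψ x 0 = true ∧ ψ x 1 = false ∧ ∀ n : ℕ, ψ x (n + 2) = x (n + 2)) :
    ∀ n : ℕ, 0 < n → ∀ z : Fin n → Bool,
      ∃ g ∈ Subgroup.closure ({φ.toEquiv, ψ.toEquiv} : Set (Equiv.Perm (ℕ → Bool))),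
        g '' {x : ℕ → Bool | x 0 = false} = {x : ℕ → Bool | ∀ i : Fin n, x i = z i} := by
  intro n hn z
  have hφ' : ∀ b (x : Stream' Bool), φ ([b] ++ₛ x) = [!b] ++ₛ x := fun b x =>
    (hφ _).trans (funext fun i => by rcases i with _ | i <;> rfl)
  have hψ₀' : ∀ x : Stream' Bool, ψ ([false] ++ₛ x) = [true, true] ++ₛ x := by
    intro x
    obtain ⟨h0, h1, h2⟩ := hψ₀ ([false] ++ₛ x) rfl
    funext i; rcases i with _ | _ | i
    exacts [h0, h1, h2 i]
  have hψ₁' : ∀ x : Stream' Bool, ψ ([true, true] ++ₛ x) = [true, false] ++ₛ x := by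
    intro x
    obtain ⟨h0, h1, h2⟩ := hψ₁ ([true, true] ++ₛ x) rfl rfl
    funext i; rcases i with _ | _ | i
    exacts [h0, h1, h2 i]
  obtain ⟨b, w, hz⟩ : ∃ b w, List.ofFn z = b :: w :=
    List.exists_cons_of_ne_nil (mt List.ofFn_eq_nil_iff.1 hn.ne')
  have hN := cylinder_cons_mem_orbit (φ := φ.toEquiv) (ψ := ψ.toEquiv)
    (Subgroup.subset_closure (mem_insert _ _))
    (Subgroup.subset_closure (mem_insert_of_mem _ (mem_singleton _)))
    hφ' hψ₀' hψ₁' w b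
  rw [mem_orbit_set_iff, ← hz, cylinder_ofFn, cylinder_singleton] at hN
  exact hN

theorem cantor_cylinder_transitivity
    (φ ψ : (ℕ → Bool) ≃ₜ (ℕ → Bool))
    (hφ : ∀ (x : ℕ → Bool), φ x = fun n => if n = 0 then !x 0 else x n)
    (hψ₀ : ∀ x : ℕ → Bool, x 0 = false →
      ψ x 0 = true ∧ ψ x 1 = true ∧ ∀ n : ℕ, ψ x (n + 2) = x (n + 1))
    (hψ₁ : ∀ x : ℕ → Bool, x 0 = true → x 1 = true →
      ψ x 0 = true ∧ ψ x 1 = false ∧ ∀ n : ℕ, ψ x (n + 2) = x (n + 2))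
    (hψ₂ : ∀ x : ℕ → Bool, x 0 = true → x 1 = false →
      ψ x 0 = false ∧ ∀ n : ℕ, ψ x (n + 1) = x (n + 2)) :
    ∀ n : ℕ, 0 < n → ∀ z : Fin n → Bool,
      ∃ g ∈ Subgroup.closure ({φ.toEquiv, ψ.toEquiv} : Set (Equiv.Perm (ℕ → Bool))),
        g '' {x : ℕ → Bool | x 0 = false} = {x : ℕ → Bool | ∀ i : Fin n, x i = z i} :=
  cantor_cylinder_transitivity_general φ ψ hφ hψ₀ hψ₁
end

section
/- Let a group Γ act by homeomorphisms on a locally compact Hausdorff space X such that for every x ∈ X there is γ ∈ Γ with γ·x ≠ x. If the action is weakly purely infinite, then there is no non-trivial regular dimension function for the action. -/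
/-
STATEMENT 12: Let a group Γ act by homeomorphisms on a locally compact Hausdorff space
X such that every point is moved by some group element.  If the action is weakly purely
infinite, then there is no non-trivial regular dimension function for the action.
-/

open scoped ENNReal

open Set Pointwise

/-- `K ≺ V` for a compact set `K` and an open set `V`. -/
def CSubEq (G : Type*) {X : Type*} [Group G] [MulAction G X] [TopologicalSpace X]
    (K V : Set X) : Prop :=
  ∃ (n : ℕ) (U : Fin n → Set X) (s : Fin n → G),
    (∀ i, IsOpen (U i)) ∧ K ⊆ ⋃ i, U i ∧ (∀ i, s i • U i ⊆ V) ∧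
      Pairwise fun i j => Disjoint (s i • U i) (s j • U j)

/-- `U ≺ V` for open sets: `K ≺ V` for every compact `K ⊆ U`. -/
def OSubEq (G : Type*) {X : Type*} [Group G] [MulAction G X] [TopologicalSpace X]
    (U V : Set X) : Prop :=
  ∀ K : Set X, K ⊆ U → IsCompact K → CSubEq G K V

/-- `U ≺_d V` for open sets. -/
def DSubEq (G : Type*) {X : Type*} [Group G] [MulAction G X] [TopologicalSpace X]
    (U V : Set X) : Prop :=
  ∀ F : Set X, F ⊆ U → IsCompact F →
    ∃ O₁ O₂ : Set X, IsOpen O₁ ∧ IsOpen O₂ ∧ O₁.Nonempty ∧ O₂.Nonempty ∧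
      O₁ ⊆ V ∧ O₂ ⊆ V ∧ Disjoint O₁ O₂ ∧ CSubEq G F O₁ ∧ CSubEq G F O₂

/-- The action has paradoxical comparison if `O ≺_d O` for every nonempty open `O`. -/
def ParadoxicalComparison (G X : Type*) [Group G] [MulAction G X]
    [TopologicalSpace X] : Prop :=
  ∀ O : Set X, IsOpen O → O.Nonempty → DSubEq G O O

/-- The action is purely infinite if `O₁ ≺_d O₂` whenever `O₁ ⊆ Γ·O₂`. -/
def PurelyInfiniteAction (G X : Type*) [Group G] [MulAction G X]
    [TopologicalSpace X] : Prop :=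
  ∀ O₁ O₂ : Set X, IsOpen O₁ → IsOpen O₂ → O₁.Nonempty → O₂.Nonempty →
    O₁ ⊆ ⋃ γ : G, γ • O₂ → DSubEq G O₁ O₂

/-- The action is weakly purely infinite if `O₁ ≺ O₂` whenever `O₁ ⊆ Γ·O₂`. -/
def WeaklyPurelyInfiniteAction (G X : Type*) [Group G] [MulAction G X]
    [TopologicalSpace X] : Prop :=
  ∀ O₁ O₂ : Set X, IsOpen O₁ → IsOpen O₂ → O₁.Nonempty → O₂.Nonempty →
    O₁ ⊆ ⋃ γ : G, γ • O₂ → OSubEq G O₁ O₂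

/-- A dimension function for the action: defined (i.e. constrained) on open sets. -/
def DimFunction (G : Type*) {X : Type*} [Group G] [MulAction G X] [TopologicalSpace X]
    (μ : Set X → ℝ≥0∞) : Prop :=
  μ ∅ = 0 ∧
  (∀ (g : G) (O : Set X), IsOpen O → μ (g • O) = μ O) ∧
  (∀ O₁ O₂ : Set X, IsOpen O₁ → IsOpen O₂ → O₁ ⊆ O₂ → μ O₁ ≤ μ O₂) ∧
  (∀ O₁ O₂ : Set X, IsOpen O₁ → IsOpen O₂ → μ (O₁ ∪ O₂) ≤ μ O₁ + μ O₂) ∧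
  (∀ O₁ O₂ : Set X, IsOpen O₁ → IsOpen O₂ → Disjoint O₁ O₂ → μ (O₁ ∪ O₂) = μ O₁ + μ O₂)

/-- Outer regular extension of a dimension function to compact sets. -/
noncomputable def cptExt {X : Type*} [TopologicalSpace X] (μ : Set X → ℝ≥0∞)
    (K : Set X) : ℝ≥0∞ :=
  ⨅ (O : Set X) (_ : IsOpen O) (_ : K ⊆ O), μ O

/-- A dimension function is regular if every open set is inner approximated by the
outer regular extension on compact subsets. -/
def RegularDimFunction (G : Type*) {X : Type*} [Group G] [MulAction G X]
    [TopologicalSpace X] (μ : Set X → ℝ≥0∞) : Prop :=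
  DimFunction G μ ∧
    ∀ O : Set X, IsOpen O → μ O = ⨆ (K : Set X) (_ : IsCompact K) (_ : K ⊆ O), cptExt μ K


/-!
If `μ` is a regular dimension function with `0 < μ O < ∞`, regularity and compactness give a
small open `V ⊆ O` with `0 < μ V` which is disjoint from one of its translates `γ • V` (every
point is moved, and `X` is Hausdorff). Then `μ (V ∪ γ • V) = 2 μ V > μ V`, while weak pure
infiniteness gives `V ∪ γ • V ≺ V`, and `≺` forces `μ (V ∪ γ • V) ≤ μ V` for regular `μ`.
-/

section

variable {G X : Type*} [Group G] [MulAction G X] [TopologicalSpace X] {μ : Set X → ℝ≥0∞}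

theorem cptExt_le {K U : Set X} (hU : IsOpen U) (hKU : K ⊆ U) : cptExt μ K ≤ μ U :=
  iInf_le_of_le U (iInf_le_of_le hU (iInf_le _ hKU))

namespace DimFunction

theorem measure_biUnion_le (hμ : DimFunction G μ) {ι : Type*} (s : Finset ι)
    {U : ι → Set X} (hU : ∀ i ∈ s, IsOpen (U i)) : μ (⋃ i ∈ s, U i) ≤ ∑ i ∈ s, μ (U i) := by
  obtain ⟨h0, -, -, hsub, -⟩ := hμ
  classical
  induction s using Finset.induction_on with
  | empty => simp [h0]
  | insert a s ha ih =>
    have hs : ∀ i ∈ s, IsOpen (U i) := fun i hi => hU i (Finset.mem_insert_of_mem hi)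
    rw [Finset.set_biUnion_insert, Finset.sum_insert ha]
    exact (hsub _ _ (hU a (Finset.mem_insert_self a s)) (isOpen_biUnion hs)).trans
      (add_le_add le_rfl (ih hs))

theorem sum_eq_measure_biUnion (hμ : DimFunction G μ) {ι : Type*} (s : Finset ι)
    {U : ι → Set X} (hU : ∀ i, IsOpen (U i)) (hd : Pairwise fun i j => Disjoint (U i) (U j)) :
    ∑ i ∈ s, μ (U i) = μ (⋃ i ∈ s, U i) := by
  obtain ⟨h0, -, -, -, hadd⟩ := hμ
  classical
  induction s using Finset.induction_on with
  | empty => simp [h0]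
  | insert a s ha ih =>
    have hdisj : Disjoint (U a) (⋃ i ∈ s, U i) :=
      disjoint_iUnion₂_right.2 fun i hi => hd (ne_of_mem_of_not_mem hi ha).symm
    rw [Finset.set_biUnion_insert, Finset.sum_insert ha,
      hadd _ _ (hU a) (isOpen_iUnion fun i => isOpen_iUnion fun _ => hU i) hdisj, ih]

variable [ContinuousConstSMul G X]

theorem measure_union_smul (hμ : DimFunction G μ) {V : Set X} (hV : IsOpen V) {γ : G}
    (hdisj : Disjoint V (γ • V)) : μ (V ∪ γ • V) = μ V + μ V := by
  obtain ⟨-, hinv, -, -, hadd⟩ := hμ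
  rw [hadd _ _ hV (hV.smul γ) hdisj, hinv γ V hV]

theorem cptExt_le_of_cSubEq (hμ : DimFunction G μ) {K V : Set X} (hV : IsOpen V)
    (h : CSubEq G K V) : cptExt μ K ≤ μ V := by
  obtain ⟨n, U, s, hU, hKU, hsV, hdisj⟩ := h
  have hsU : ∀ i, IsOpen (s i • U i) := fun i => (hU i).smul (s i)
  calc cptExt μ K ≤ μ (⋃ i ∈ Finset.univ, U i) :=
        cptExt_le (isOpen_biUnion fun i _ => hU i) (by simpa using hKU)
    _ ≤ ∑ i, μ (U i) := hμ.measure_biUnion_le _ fun i _ => hU i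
    _ = ∑ i, μ (s i • U i) := Finset.sum_congr rfl fun i _ => (hμ.2.1 (s i) (U i) (hU i)).symm
    _ = μ (⋃ i ∈ Finset.univ, s i • U i) := hμ.sum_eq_measure_biUnion _ hsU hdisj
    _ ≤ μ V := hμ.2.2.1 _ _ (isOpen_biUnion fun i _ => hsU i) hV (by simpa using hsV)

end DimFunction

namespace RegularDimFunction

theorem exists_isCompact_lt_cptExt (hμ : RegularDimFunction G μ) {O : Set X} (hO : IsOpen O)
    {c : ℝ≥0∞} (hc : c < μ O) : ∃ K, IsCompact K ∧ K ⊆ O ∧ c < cptExt μ K := by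
  rw [hμ.2 O hO] at hc
  simpa only [lt_iSup_iff, exists_prop] using hc

theorem le_of_oSubEq [ContinuousConstSMul G X] (hμ : RegularDimFunction G μ) {U V : Set X}
    (hU : IsOpen U) (hV : IsOpen V) (h : OSubEq G U V) : μ U ≤ μ V := by
  rw [hμ.2 U hU]
  exact iSup₂_le fun K hK => iSup_le fun hKU => hμ.1.cptExt_le_of_cSubEq hV (h K hKU hK)

/-- `μ` is only finitely subadditive, so this goes through a compact `K ⊆ O` of positive
dimension and a finite subcover of it. -/
theorem exists_pos_of_isOpen_cover (hμ : RegularDimFunction G μ) {O : Set X} (hO : IsOpen O)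
    (hpos : 0 < μ O) {W : X → Set X} (hWo : ∀ x ∈ O, IsOpen (W x)) (hxW : ∀ x ∈ O, x ∈ W x) :
    ∃ x ∈ O, 0 < μ (W x) := by
  obtain ⟨K, hK, hKO, hKpos⟩ := hμ.exists_isCompact_lt_cptExt hO hpos
  obtain ⟨t, htK, hKt⟩ := hK.elim_nhds_subcover W fun x hx =>
    (hWo x (hKO hx)).mem_nhds (hxW x (hKO hx))
  by_contra! hzero
  have hWt : ∀ x ∈ t, IsOpen (W x) := fun x hx => hWo x (hKO (htK x hx))
  have hK0 : cptExt μ K ≤ 0 := calc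
    cptExt μ K ≤ μ (⋃ x ∈ t, W x) := cptExt_le (isOpen_biUnion hWt) hKt
    _ ≤ ∑ x ∈ t, μ (W x) := hμ.1.measure_biUnion_le t hWt
    _ = 0 := Finset.sum_eq_zero fun x hx => nonpos_iff_eq_zero.1 (hzero x (hKO (htK x hx)))
  exact hKpos.not_ge hK0

end RegularDimFunction

variable [ContinuousConstSMul G X]

theorem exists_isOpen_mem_disjoint_smul [T2Space X] {x : X} {γ : G} (h : γ • x ≠ x) :
    ∃ W : Set X, IsOpen W ∧ x ∈ W ∧ Disjoint W (γ • W) := by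
  obtain ⟨A, B, hA, hB, hxA, hγxB, hAB⟩ := t2_separation h.symm
  refine ⟨A ∩ (γ • ·) ⁻¹' B, hA.inter (hB.preimage (continuous_const_smul γ)), ⟨hxA, hγxB⟩, ?_⟩
  refine hAB.mono inter_subset_left ?_
  rintro _ ⟨y, hy, rfl⟩
  exact hy.2

theorem WeaklyPurelyInfiniteAction.oSubEq_union_smul (hwpi : WeaklyPurelyInfiniteAction G X)
    {V : Set X} (hV : IsOpen V) (hne : V.Nonempty) (γ : G) : OSubEq G (V ∪ γ • V) V := by
  refine hwpi _ _ (hV.union (hV.smul γ)) hV (hne.mono subset_union_left) hne ?_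
  rintro y (hy | hy)
  · exact mem_iUnion.2 ⟨1, by simpa using hy⟩
  · exact mem_iUnion.2 ⟨γ, hy⟩

end

theorem weaklyPurelyInfinite_no_dimension_function_general {G X : Type*} [Group G]
    [TopologicalSpace X] [T2Space X]
    [MulAction G X] [ContinuousConstSMul G X]
    (hfree : ∀ x : X, ∃ γ : G, γ • x ≠ x)
    (hwpi : WeaklyPurelyInfiniteAction G X) :
    ¬∃ μ : Set X → ℝ≥0∞, RegularDimFunction G μ ∧
      ∃ O : Set X, IsOpen O ∧ 0 < μ O ∧ μ O < ⊤ := by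
  rintro ⟨μ, hμ, O, hO, hpos, hfin⟩
  have hwandering : ∀ x ∈ O, ∃ W : Set X, IsOpen W ∧ x ∈ W ∧ W ⊆ O ∧
      ∃ γ : G, Disjoint W (γ • W) := by
    intro x hx
    obtain ⟨γ, hγ⟩ := hfree x
    obtain ⟨W, hW, hxW, hdisj⟩ := exists_isOpen_mem_disjoint_smul hγ
    exact ⟨W ∩ O, hW.inter hO, ⟨hxW, hx⟩, inter_subset_right, γ,
      hdisj.mono inter_subset_left (smul_set_mono inter_subset_left)⟩
  choose! W hWo hxW hWO γ hdisj using hwandering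
  obtain ⟨x, hx, hVpos⟩ := hμ.exists_pos_of_isOpen_cover hO hpos hWo hxW
  have hV := hWo x hx
  have hVfin : μ (W x) ≠ ⊤ := ((hμ.1.2.2.1 _ _ hV hO (hWO x hx)).trans_lt hfin).ne
  have hle := hμ.le_of_oSubEq (hV.union (hV.smul _)) hV
    (hwpi.oSubEq_union_smul hV ⟨x, hxW x hx⟩ (γ x))
  rw [hμ.1.measure_union_smul hV (hdisj x hx)] at hle
  exact hle.not_gt (ENNReal.lt_add_right hVfin hVpos.ne')

theorem weaklyPurelyInfinite_no_dimension_function {G X : Type*} [Group G]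
    [TopologicalSpace X] [LocallyCompactSpace X] [T2Space X]
    [MulAction G X] [ContinuousConstSMul G X]
    (hfree : ∀ x : X, ∃ γ : G, γ • x ≠ x)
    (hwpi : WeaklyPurelyInfiniteAction G X) :
    ¬∃ μ : Set X → ℝ≥0∞, RegularDimFunction G μ ∧
      ∃ O : Set X, IsOpen O ∧ 0 < μ O ∧ μ O < ⊤ :=
  weaklyPurelyInfinite_no_dimension_function_general hfree hwpi
end

section
/- Let a group Γ act by homeomorphisms on a locally compact Hausdorff space X whose topology has a basis consisting of compact open sets. Then the action has paradoxical comparison if and only if O ≺_d O for every nonempty compact open set O ⊆ X. -/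
/-
STATEMENT 13: If a group Γ acts by homeomorphisms on a locally compact Hausdorff space
X whose topology has a basis of compact open sets, then the action has paradoxical
comparison iff O ≺_d O for every nonempty compact open O ⊆ X.
-/

open Set Pointwise

/-!
Given a compact `F` inside a nonempty open `O`, cover `F` together with one point of `O` by
finitely many compact open basic sets contained in `O`. Their union `K` is a nonempty compact
open set with `F ⊆ K ⊆ O`, and the witnesses of `K ≺_d K` for `F` also witness `O ≺_d O`.
-/

theorem TopologicalSpace.IsTopologicalBasis.exists_isCompact_isOpen_between {X : Type*}
    [TopologicalSpace X] {B : Set (Set X)} (hbasis : IsTopologicalBasis B)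
    (hB : ∀ b ∈ B, IsCompact b) {F O : Set X} (hF : IsCompact F) (hO : IsOpen O)
    (hFO : F ⊆ O) : ∃ K, IsCompact K ∧ IsOpen K ∧ F ⊆ K ∧ K ⊆ O := by
  have hnhds : ∀ x ∈ F, ∃ b ∈ B, x ∈ b ∧ b ⊆ O := fun x hx =>
    hbasis.exists_subset_of_mem_open (hFO hx) hO
  choose! b hbB hxb hbO using hnhds
  obtain ⟨t, htF, hFt⟩ :=
    hF.elim_nhds_subcover b fun x hx => (hbasis.isOpen (hbB x hx)).mem_nhds (hxb x hx)
  exact ⟨⋃ x ∈ t, b x, t.isCompact_biUnion fun x hx => hB _ (hbB x (htF x hx)),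
    isOpen_biUnion fun x hx => hbasis.isOpen (hbB x (htF x hx)), hFt,
    iUnion₂_subset fun x hx => hbO x (htF x hx)⟩

theorem DSubEq.mono_right {G X : Type*} [Group G] [MulAction G X] [TopologicalSpace X]
    {U V V' : Set X} (h : DSubEq G U V) (hV : V ⊆ V') : DSubEq G U V' := by
  intro F hFU hF
  obtain ⟨O₁, O₂, h₁, h₂, hn₁, hn₂, hs₁, hs₂, hd, hc₁, hc₂⟩ := h F hFU hF
  exact ⟨O₁, O₂, h₁, h₂, hn₁, hn₂, hs₁.trans hV, hs₂.trans hV, hd, hc₁, hc₂⟩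

theorem paradoxicalComparison_iff_compactOpen_general {G X : Type*} [Group G]
    [TopologicalSpace X] [MulAction G X]
    (hbasis : ∃ B : Set (Set X), (∀ O ∈ B, IsCompact O ∧ IsOpen O) ∧
      TopologicalSpace.IsTopologicalBasis B) :
    ParadoxicalComparison G X ↔
      ∀ O : Set X, IsCompact O → IsOpen O → O.Nonempty → DSubEq G O O := by
  refine ⟨fun h O _ hO hne => h O hO hne, fun h O hO hne F hFO hF => ?_⟩
  obtain ⟨B, hB, hbasis⟩ := hbasis
  obtain ⟨x₀, hx₀⟩ := hne
  obtain ⟨K, hKc, hKo, hFK, hKO⟩ :=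
    hbasis.exists_isCompact_isOpen_between (fun b hb => (hB b hb).1)
      (hF.union isCompact_singleton) hO (union_subset hFO (singleton_subset_iff.2 hx₀))
  exact (h K hKc hKo ⟨x₀, hFK (Or.inr rfl)⟩).mono_right hKO F
    (subset_union_left.trans hFK) hF

theorem paradoxicalComparison_iff_compactOpen {G X : Type*} [Group G]
    [TopologicalSpace X] [LocallyCompactSpace X] [T2Space X]
    [MulAction G X] [ContinuousConstSMul G X]
    (hbasis : ∃ B : Set (Set X), (∀ O ∈ B, IsCompact O ∧ IsOpen O) ∧
      TopologicalSpace.IsTopologicalBasis B) :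
    ParadoxicalComparison G X ↔
      ∀ O : Set X, IsCompact O → IsOpen O → O.Nonempty → DSubEq G O O :=
  paradoxicalComparison_iff_compactOpen_general hbasis
end

section
/- Let α : Γ ↷ X be an action of a countable discrete group Γ on a nonempty compact metrizable space X that has paradoxical comparison. Let Γ* = Γ ∪ {∞} be the one-point compactification of Γ, and let β : Γ ↷ Γ* be the action by left translation on Γ fixing ∞. Then the product action α × β : Γ ↷ X × Γ*, given by γ·(x,h) = (γ·x, γh), does not have paradoxical comparison; indeed, for every h ∈ Γ there do not exist disjoint nonempty open sets U₁, U₂ ⊆ X × {h} with X × {h} ≺ U₁ and X × {h} ≺ U₂. -/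
/-!
A group element that moves a point of `X × {h}` back into `X × {h}` must be `1`. Hence if
`K ⊆ X × {h}` and `K ≺ U` with `U ⊆ X × {h}`, every point of `K` reaches `U` by the identity,
so `K ⊆ U`; two disjoint such `U` are therefore impossible for nonempty `K`. As `X × {1}` is open
in `X × Γ*`, taking for `F` a single point of it shows that `X × {1} ≺_d X × {1}` fails.
-/

open Set

section Subequivalence

variable {G X : Type*} [TopologicalSpace X] {a : G → X → X} {K U₁ U₂ S : Set X}

theorem ActCSubEq.subset_of_returns_fixed (hS : ∀ g, ∀ p ∈ S, a g p ∈ S → a g p = p)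
    (hKS : K ⊆ S) (hUS : U₁ ⊆ S) (hKU : ActCSubEq a K U₁) : K ⊆ U₁ := by
  obtain ⟨n, V, s, -, hcov, hsub, -⟩ := hKU
  intro p hp
  obtain ⟨i, hi⟩ := mem_iUnion.1 (hcov hp)
  have hmem : a (s i) p ∈ U₁ := hsub i ⟨p, hi, rfl⟩
  rwa [← hS (s i) p (hKS hp) (hUS hmem)]

theorem ActCSubEq.not_disjoint_of_returns_fixed (hS : ∀ g, ∀ p ∈ S, a g p ∈ S → a g p = p)
    (hKS : K ⊆ S) (hU₁S : U₁ ⊆ S) (hU₂S : U₂ ⊆ S) (hKU₁ : ActCSubEq a K U₁)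
    (hKU₂ : ActCSubEq a K U₂) (hK : K.Nonempty) : ¬Disjoint U₁ U₂ :=
  not_disjoint_iff_nonempty_inter.2 <| hK.mono <|
    subset_inter (hKU₁.subset_of_returns_fixed hS hKS hU₁S)
      (hKU₂.subset_of_returns_fixed hS hKS hU₂S)

end Subequivalence

theorem prod_onePoint_translate_eq_of_mem {G X : Type*} [Group G] [MulAction G X] (h γ : G)
    (p : X × OnePoint G) (hp : p ∈ univ ×ˢ {(h : OnePoint G)})
    (hγp : ((γ • p.1 : X), OnePoint.map (γ * ·) p.2) ∈ univ ×ˢ {(h : OnePoint G)}) :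
    ((γ • p.1 : X), OnePoint.map (γ * ·) p.2) = p := by
  obtain ⟨x, y⟩ := p
  obtain rfl : y = h := hp.2
  have hγ : γ * h = h := OnePoint.coe_injective hγp.2
  obtain rfl : γ = 1 := mul_eq_right.1 hγ
  simp

theorem extension_fails_paradoxicalComparison_general {G X : Type*} [Group G]
    [TopologicalSpace G] [DiscreteTopology G]
    [TopologicalSpace X] [Nonempty X]
    [MulAction G X] :
    (¬ActParadoxicalComparison
        (fun (γ : G) (p : X × OnePoint G) => ((γ • p.1 : X), OnePoint.map (γ * ·) p.2))) ∧
    ∀ h : G, ¬∃ U₁ U₂ : Set (X × OnePoint G),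
      IsOpen U₁ ∧ IsOpen U₂ ∧ U₁.Nonempty ∧ U₂.Nonempty ∧
      U₁ ⊆ Set.univ ×ˢ {(h : OnePoint G)} ∧ U₂ ⊆ Set.univ ×ˢ {(h : OnePoint G)} ∧
      Disjoint U₁ U₂ ∧
      ActCSubEq (fun (γ : G) (p : X × OnePoint G) =>
          ((γ • p.1 : X), OnePoint.map (γ * ·) p.2))
        (Set.univ ×ˢ {(h : OnePoint G)}) U₁ ∧
      ActCSubEq (fun (γ : G) (p : X × OnePoint G) =>
          ((γ • p.1 : X), OnePoint.map (γ * ·) p.2))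
        (Set.univ ×ˢ {(h : OnePoint G)}) U₂ := by
  obtain ⟨x⟩ := ‹Nonempty X›
  refine ⟨fun hpc => ?_, fun h ⟨U₁, U₂, _, _, _, _, hU₁, hU₂, hdisj, hC₁, hC₂⟩ =>
    ActCSubEq.not_disjoint_of_returns_fixed (prod_onePoint_translate_eq_of_mem h) subset_rfl
      hU₁ hU₂ hC₁ hC₂ ⟨(x, h), trivial, rfl⟩ hdisj⟩
  have hO : IsOpen (univ ×ˢ {((1 : G) : OnePoint G)} : Set (X × OnePoint G)) :=
    isOpen_univ.prod <| by simpa using OnePoint.isOpenMap_coe {(1 : G)} (isOpen_discrete _)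
  have hx : {(x, ((1 : G) : OnePoint G))} ⊆ univ ×ˢ {((1 : G) : OnePoint G)} :=
    singleton_subset_iff.2 ⟨trivial, rfl⟩
  obtain ⟨O₁, O₂, -, -, -, -, hO₁, hO₂, hdisj, hC₁, hC₂⟩ :=
    hpc _ hO (singleton_nonempty _ |>.mono hx) _ hx isCompact_singleton
  exact ActCSubEq.not_disjoint_of_returns_fixed (prod_onePoint_translate_eq_of_mem 1) hx hO₁ hO₂
    hC₁ hC₂ (singleton_nonempty _) hdisj

theorem extension_fails_paradoxicalComparison {G X : Type*} [Group G] [Countable G]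
    [TopologicalSpace G] [DiscreteTopology G]
    [TopologicalSpace X] [CompactSpace X] [T2Space X]
    [TopologicalSpace.MetrizableSpace X] [Nonempty X]
    [MulAction G X] [ContinuousConstSMul G X]
    (hpara : ActParadoxicalComparison (fun (g : G) (x : X) => g • x)) :
    (¬ActParadoxicalComparison
        (fun (γ : G) (p : X × OnePoint G) => ((γ • p.1 : X), OnePoint.map (γ * ·) p.2))) ∧
    ∀ h : G, ¬∃ U₁ U₂ : Set (X × OnePoint G),
      IsOpen U₁ ∧ IsOpen U₂ ∧ U₁.Nonempty ∧ U₂.Nonempty ∧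
      U₁ ⊆ Set.univ ×ˢ {(h : OnePoint G)} ∧ U₂ ⊆ Set.univ ×ˢ {(h : OnePoint G)} ∧
      Disjoint U₁ U₂ ∧
      ActCSubEq (fun (γ : G) (p : X × OnePoint G) =>
          ((γ • p.1 : X), OnePoint.map (γ * ·) p.2))
        (Set.univ ×ˢ {(h : OnePoint G)}) U₁ ∧
      ActCSubEq (fun (γ : G) (p : X × OnePoint G) =>
          ((γ • p.1 : X), OnePoint.map (γ * ·) p.2))
        (Set.univ ×ˢ {(h : OnePoint G)}) U₂ :=
  extension_fails_paradoxicalComparison_general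
end
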